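/- arXiv:2506.20775 — 3 statements merged into one kernel-verified Lean document; each statement's English description precedes it below -/
import Mathlib

section
/- For all t ≤ T, ξ, η ∈ ℝ³ and δ > 0, one has 1 + δ ∫_t^T ⟨ξ + (t−τ)η⟩² dτ ≥ 1 + (δ/4) ⟨ξ⟩² (T − t), where ⟨x⟩ = (1+|x|²)^{1/2}. -/
open MeasureTheory

/-- Integral of a quadratic polynomial in `t - τ` over `[t, T]`. -/
theorem polyint_aux (t T A B C : ℝ) :
    (∫ τ in t..T, (A + B * (t - τ) + C * (t - τ) ^ 2))
      = (T - t) * A - (T - t) ^ 2 * B / 2 + (T - t) ^ 3 / 3 * C := by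
  have hcong : (∫ τ in t..T, (A + B * (t - τ) + C * (t - τ) ^ 2))
      = ∫ τ in t..T, ((A + B * t + C * t ^ 2) + (-(B + 2 * C * t)) * τ + C * τ ^ 2) := by
    apply intervalIntegral.integral_congr
    intro τ _
    ring
  rw [hcong]
  have h1 : IntervalIntegrable (fun τ : ℝ => (A + B * t + C * t ^ 2) + (-(B + 2 * C * t)) * τ) volume t T :=
    (continuous_const.add (continuous_const.mul continuous_id)).intervalIntegrable _ _
  have h2 : IntervalIntegrable (fun τ : ℝ => C * τ ^ 2) volume t T :=
    (continuous_const.mul (continuous_pow 2)).intervalIntegrable _ _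
  have h3 : IntervalIntegrable (fun _ : ℝ => A + B * t + C * t ^ 2) volume t T :=
    intervalIntegrable_const
  have h4 : IntervalIntegrable (fun τ : ℝ => (-(B + 2 * C * t)) * τ) volume t T :=
    (continuous_const.mul continuous_id).intervalIntegrable _ _
  rw [intervalIntegral.integral_add h1 h2, intervalIntegral.integral_add h3 h4,
    intervalIntegral.integral_const, intervalIntegral.integral_const_mul,
    intervalIntegral.integral_const_mul, integral_id, integral_pow]
  simp only [smul_eq_mul]
  push_cast
  ring

/-- The squared Japanese bracket `⟨x⟩² = 1 + |x|²`. -/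
noncomputable def jbSq (x : EuclideanSpace ℝ (Fin 3)) : ℝ := 1 + ‖x‖ ^ 2

/-- For all `t ≤ T`, `ξ, η ∈ ℝ³` and `δ > 0`,
`1 + δ ∫_t^T ⟨ξ + (t−τ)η⟩² dτ ≥ 1 + (δ/4) ⟨ξ⟩² (T − t)`. -/
theorem M_symbol_lower_bound (t T δ : ℝ) (ht : t ≤ T) (hδ : 0 < δ)
    (ξ η : EuclideanSpace ℝ (Fin 3)) :
    1 + δ / 4 * jbSq ξ * (T - t) ≤
      1 + δ * ∫ τ in t..T, jbSq (ξ + (t - τ) • η) := by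
  obtain ⟨I, hI⟩ : ∃ I : ℝ, (inner ℝ ξ η : ℝ) = I := ⟨_, rfl⟩
  have hpt : ∀ τ : ℝ, jbSq (ξ + (t - τ) • η)
      = (1 + ‖ξ‖ ^ 2) + (2 * I) * (t - τ) + ‖η‖ ^ 2 * (t - τ) ^ 2 := by
    intro τ
    have h := @norm_add_sq_real (EuclideanSpace ℝ (Fin 3)) _ _ ξ ((t - τ) • η)
    rw [jbSq, h, real_inner_smul_right, hI, norm_smul, Real.norm_eq_abs, mul_pow, sq_abs]
    ring
  have key : ∫ τ in t..T, jbSq (ξ + (t - τ) • η) =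
      (T - t) * (1 + ‖ξ‖ ^ 2) - (T - t) ^ 2 * (2 * I) / 2 + (T - t) ^ 3 / 3 * ‖η‖ ^ 2 := by
    rw [intervalIntegral.integral_congr (fun τ _ => hpt τ)]
    exact polyint_aux t T (1 + ‖ξ‖ ^ 2) (2 * I) (‖η‖ ^ 2)
  rw [key]
  have hL : (0:ℝ) ≤ T - t := by linarith
  have hCS : I ≤ ‖ξ‖ * ‖η‖ := hI ▸ real_inner_le_norm ξ η
  have ha : (0:ℝ) ≤ ‖ξ‖ := norm_nonneg _
  have hb : (0:ℝ) ≤ ‖η‖ := norm_nonneg _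
  rw [jbSq]
  nlinarith [mul_nonneg hL (sq_nonneg (3 * ‖ξ‖ - 2 * (T - t) * ‖η‖)),
    mul_le_mul_of_nonneg_left hCS (le_of_lt hδ), hδ.le,
    mul_nonneg (mul_nonneg hδ.le (mul_nonneg hL hL)) (sub_nonneg.mpr hCS),
    mul_nonneg hL (mul_nonneg hb hb), sq_nonneg (T - t)]
end

section
/- Let δ > 0, ε > 0, 0 ≤ t ≤ T₀, and define M(t,T,η,ξ) = (1 + δ ∫_t^T ⟨ξ + (t−τ)η⟩² dτ)^{-(1/2+ε)}. Then for every ξ, η ∈ ℝ³, ∫_t^{T₀} ⟨ξ⟩² M(t,T,η,ξ)² dT ≤ 2/(ε δ). -/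
open MeasureTheory

/-- The symbol `M(t,T,η,ξ) = (1 + δ ∫_t^T ⟨ξ + (t−τ)η⟩² dτ)^{-(1/2+ε)}`. -/
noncomputable def Msymb (δ ε t T : ℝ) (η ξ : EuclideanSpace ℝ (Fin 3)) : ℝ :=
  (1 + δ * ∫ τ in t..T, jbSq (ξ + (t - τ) • η)) ^ (-(1/2 + ε) : ℝ)

open scoped RealInnerProductSpace

lemma inner_integral_eq (t T : ℝ) (ξ η : EuclideanSpace ℝ (Fin 3)) :
    (∫ τ in t..T, jbSq (ξ + (t - τ) • η))
      = (1 + ‖ξ‖ ^ 2) * (T - t) - ⟪ξ, η⟫ * (T - t) ^ 2 + ‖η‖ ^ 2 * (T - t) ^ 3 / 3 := by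
  have hcong : ∀ τ ∈ Set.uIcc t T, jbSq (ξ + (t - τ) • η)
      = 1 + ‖ξ‖ ^ 2 + 2 * (t - τ) * ⟪ξ, η⟫ + (t - τ) ^ 2 * ‖η‖ ^ 2 := by
    intro τ _
    simp only [jbSq, norm_add_sq_real, real_inner_smul_right, norm_smul, mul_pow,
      Real.norm_eq_abs, sq_abs]
    ring
  rw [intervalIntegral.integral_congr hcong]
  have hF : ∀ τ ∈ Set.uIcc t T, HasDerivAt
      (fun τ => (1 + ‖ξ‖ ^ 2) * τ - ⟪ξ, η⟫ * (t - τ) ^ 2 - ‖η‖ ^ 2 * (t - τ) ^ 3 / 3)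
      (1 + ‖ξ‖ ^ 2 + 2 * (t - τ) * ⟪ξ, η⟫ + (t - τ) ^ 2 * ‖η‖ ^ 2) τ := by
    intro τ _
    have h1 : HasDerivAt (fun τ : ℝ => t - τ) (-1) τ := (hasDerivAt_id τ).const_sub t
    have h2 := ((h1.pow 2).const_mul (⟪ξ, η⟫ : ℝ))
    have h3 := ((h1.pow 3).const_mul (‖η‖ ^ 2)).div_const 3
    have h4 := (hasDerivAt_id τ).const_mul (1 + ‖ξ‖ ^ 2)
    convert (h4.sub h2).sub h3 using 1
    · rfl
    · rfl
    · rfl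
    ring
  rw [intervalIntegral.integral_eq_sub_of_hasDerivAt hF (by
    apply Continuous.intervalIntegrable; continuity)]
  ring

lemma poly_lower_bound (t T : ℝ) (htT : t ≤ T) (ξ η : EuclideanSpace ℝ (Fin 3)) :
    (1 + ‖ξ‖ ^ 2) * (T - t) / 4
      ≤ (1 + ‖ξ‖ ^ 2) * (T - t) - ⟪ξ, η⟫ * (T - t) ^ 2 + ‖η‖ ^ 2 * (T - t) ^ 3 / 3 := by
  have hb : ⟪ξ, η⟫ ≤ ‖ξ‖ * ‖η‖ := real_inner_le_norm ξ η
  have hL : 0 ≤ T - t := by linarith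
  nlinarith [mul_nonneg hL (sq_nonneg (3 * ‖ξ‖ - 2 * (‖η‖ * (T - t)))),
    mul_le_mul_of_nonneg_right hb (mul_nonneg hL hL), sq_nonneg (T - t),
    mul_nonneg hL hL, norm_nonneg ξ, norm_nonneg η]

/-- for every `ξ, η ∈ ℝ³`,
`∫_t^{T₀} ⟨ξ⟩² M(t,T,η,ξ)² dT ≤ 2/(ε δ)`. -/
theorem M_symbol_time_integral_bound (δ ε t T₀ : ℝ) (hδ : 0 < δ) (hε : 0 < ε)
    (ht : 0 ≤ t) (htT₀ : t ≤ T₀) (ξ η : EuclideanSpace ℝ (Fin 3)) :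
    (∫ T in t..T₀, jbSq ξ * (Msymb δ ε t T η ξ) ^ 2) ≤ 2 / (ε * δ) := by
  set A : ℝ := 1 + ‖ξ‖ ^ 2 with hA
  have hA1 : (1 : ℝ) ≤ A := by nlinarith [sq_nonneg ‖ξ‖]
  have hA0 : (0 : ℝ) < A := by linarith
  set c : ℝ := δ * A / 4 with hc
  have hc0 : (0 : ℝ) < c := by positivity
  set P : ℝ → ℝ := fun T =>
    (1 + ‖ξ‖ ^ 2) * (T - t) - ⟪ξ, η⟫ * (T - t) ^ 2 + ‖η‖ ^ 2 * (T - t) ^ 3 / 3 with hP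
  have hM : ∀ T, Msymb δ ε t T η ξ = (1 + δ * P T) ^ (-(1/2 + ε) : ℝ) := by
    intro T; rw [Msymb, inner_integral_eq]
  -- base bounds on [t, T₀]
  have hbase : ∀ T ∈ Set.Icc t T₀, 1 + c * (T - t) ≤ 1 + δ * P T := by
    intro T hT
    have := poly_lower_bound t T hT.1 ξ η
    have : A * (T - t) / 4 ≤ P T := this
    have h2 : c * (T - t) ≤ δ * P T := by
      calc c * (T - t) = δ * (A * (T - t) / 4) := by rw [hc]; ring
        _ ≤ δ * P T := by nlinarith
    linarith
  have hbase1 : ∀ T ∈ Set.Icc t T₀, (1 : ℝ) ≤ 1 + c * (T - t) := by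
    intro T hT; nlinarith [hT.1, hc0]
  -- the comparison function
  set h : ℝ → ℝ := fun T => A * (1 + c * (T - t)) ^ (-(1 + 2 * ε) : ℝ) with hh
  -- pointwise bound
  have hpt : ∀ T ∈ Set.Icc t T₀, jbSq ξ * (Msymb δ ε t T η ξ) ^ 2 ≤ h T := by
    intro T hT
    have hB1 : (1 : ℝ) ≤ 1 + δ * P T := le_trans (hbase1 T hT) (hbase T hT)
    have hB0 : (0 : ℝ) < 1 + δ * P T := by linarith
    have hsq : (Msymb δ ε t T η ξ) ^ 2 = (1 + δ * P T) ^ (-(1 + 2 * ε) : ℝ) := by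
      rw [hM, ← Real.rpow_natCast ((1 + δ * P T) ^ (-(1/2 + ε) : ℝ)) 2,
        ← Real.rpow_mul hB0.le]
      norm_num
      ring_nf
    rw [hsq]
    have hmono : (1 + δ * P T) ^ (-(1 + 2 * ε) : ℝ)
        ≤ (1 + c * (T - t)) ^ (-(1 + 2 * ε) : ℝ) := by
      apply Real.rpow_le_rpow_of_nonpos
      · linarith [hbase1 T hT]
      · exact hbase T hT
      · linarith
    have : jbSq ξ = A := rfl
    rw [this, hh]
    exact mul_le_mul_of_nonneg_left hmono hA0.le
  -- continuity / integrability
  have huIcc : Set.uIcc t T₀ = Set.Icc t T₀ := Set.uIcc_of_le htT₀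
  have hPcont : Continuous P := by fun_prop
  have hint_g : IntervalIntegrable (fun T => jbSq ξ * (Msymb δ ε t T η ξ) ^ 2)
      volume t T₀ := by
    apply ContinuousOn.intervalIntegrable
    rw [huIcc]
    have : ContinuousOn (fun T => (1 + δ * P T) ^ (-(1/2 + ε) : ℝ)) (Set.Icc t T₀) := by
      apply ContinuousOn.rpow_const (by fun_prop)
      intro T hT
      left
      have hB1 : (1 : ℝ) ≤ 1 + δ * P T := le_trans (hbase1 T hT) (hbase T hT)
      linarith
    have h2 : ContinuousOn (fun T => jbSq ξ * ((1 + δ * P T) ^ (-(1/2 + ε) : ℝ)) ^ 2)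
        (Set.Icc t T₀) := continuousOn_const.mul (this.pow 2)
    apply ContinuousOn.congr h2
    intro T hT
    simp only [hM]
  have hint_h : IntervalIntegrable h volume t T₀ := by
    apply ContinuousOn.intervalIntegrable
    rw [huIcc]
    apply ContinuousOn.mul continuousOn_const
    apply ContinuousOn.rpow_const (by fun_prop)
    intro T hT
    left
    linarith [hbase1 T hT]
  -- compare integrals
  have hle : (∫ T in t..T₀, jbSq ξ * (Msymb δ ε t T η ξ) ^ 2) ≤ ∫ T in t..T₀, h T :=
    intervalIntegral.integral_mono_on htT₀ hint_g hint_h hpt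
  -- compute ∫ h via FTC
  set H : ℝ → ℝ := fun T => -(A / (2 * ε * c)) * (1 + c * (T - t)) ^ (-(2 * ε) : ℝ) with hH
  have hderiv : ∀ T ∈ Set.uIcc t T₀, HasDerivAt H (h T) T := by
    intro T hT
    rw [huIcc] at hT
    have hB : (0 : ℝ) < 1 + c * (T - t) := by linarith [hbase1 T hT]
    have hin : HasDerivAt (fun T : ℝ => 1 + c * (T - t)) c T := by
      simpa using (((hasDerivAt_id T).sub_const t).const_mul c).const_add 1
    have hout := (Real.hasDerivAt_rpow_const (x := 1 + c * (T - t))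
      (p := (-(2 * ε) : ℝ)) (Or.inl hB.ne')).comp T hin
    have := hout.const_mul (-(A / (2 * ε * c)))
    convert this using 1
    · rfl
    · rfl
    · rfl
    rw [hh]
    have hexp : (-(2 * ε) - 1 : ℝ) = -(1 + 2 * ε) := by ring
    field_simp
    ring_nf
  have hcalc : (∫ T in t..T₀, h T) = H T₀ - H t :=
    intervalIntegral.integral_eq_sub_of_hasDerivAt hderiv hint_h
  have hHt : H t = -(A / (2 * ε * c)) := by
    rw [hH]; simp
  have hHT₀ : H T₀ ≤ 0 := by
    rw [hH]
    have : (0:ℝ) ≤ (1 + c * (T₀ - t)) ^ (-(2 * ε) : ℝ) :=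
      Real.rpow_nonneg (by nlinarith [hbase1 T₀ ⟨htT₀, le_refl T₀⟩]) _
    nlinarith [div_nonneg hA0.le (by positivity : (0:ℝ) ≤ 2 * ε * c)]
  have hfinal : H T₀ - H t ≤ 2 / (ε * δ) := by
    rw [hHt]
    have : A / (2 * ε * c) = 2 / (ε * δ) := by
      rw [hc]; field_simp; ring
    linarith
  linarith [hle, hcalc ▸ hfinal]
end

section
/- With M(t,T,η,ξ) = (1 + δ ∫_t^T ⟨ξ + (t−τ)η⟩² dτ)^{-(1/2+ε)}, for any h ∈ L²([0,T₀] × 𝕋³ × ℝ³) one has ∫_0^{T₀} ∫_0^T ∑_η ∫_{ℝ³} |ξ|² |M(t,T,η,ξ) ĥ(t,η,ξ)|² dξ dt dT ≤ (2/(ε δ)) ∫_0^{T₀} ∑_η ∫_{ℝ³} |ĥ(t,η,ξ)|² dξ dt. -/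
open MeasureTheory
open scoped ENNReal

section Aux

open intervalIntegral

/-- Explicit formula for the inner time integral. -/
lemma integral_jbSq (t T : ℝ) (η ξ : EuclideanSpace ℝ (Fin 3)) :
    ∫ τ in t..T, jbSq (ξ + (t - τ) • η)
      = (T - t) * (1 + ‖ξ‖^2) - (T - t)^2 * (inner ℝ ξ η : ℝ) + (T - t)^3 * ‖η‖^2 / 3 := by
  have hpt : ∀ τ : ℝ, jbSq (ξ + (t - τ) • η)
      = (fun x : ℝ => (1 + ‖ξ‖^2) - (2 * (inner ℝ ξ η : ℝ)) * x + ‖η‖^2 * x^2) (τ - t) := by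
    intro τ
    simp only [jbSq]
    rw [show ξ + (t - τ) • η = ξ - (τ - t) • η by module]
    rw [norm_sub_sq_real]
    rw [real_inner_smul_right, norm_smul]
    simp [mul_pow, sq_abs]
    ring
  rw [intervalIntegral.integral_congr (g := fun τ => (fun x : ℝ => (1 + ‖ξ‖^2) - (2 * (inner ℝ ξ η : ℝ)) * x + ‖η‖^2 * x^2) (τ - t)) (fun τ _ => hpt τ)]
  rw [intervalIntegral.integral_comp_sub_right (fun x : ℝ => (1 + ‖ξ‖^2) - (2 * (inner ℝ ξ η : ℝ)) * x + ‖η‖^2 * x^2) t]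
  have h1 : IntervalIntegrable (fun x : ℝ => (1 + ‖ξ‖^2) - (2 * (inner ℝ ξ η : ℝ)) * x) volume (t-t) (T-t) := by
    apply IntervalIntegrable.sub intervalIntegrable_const
    exact (intervalIntegral.intervalIntegrable_id).const_mul _
  have h2 : IntervalIntegrable (fun x : ℝ => ‖η‖^2 * x^2) volume (t-t) (T-t) :=
    (intervalIntegral.intervalIntegrable_pow 2).const_mul _
  rw [intervalIntegral.integral_add h1 h2, intervalIntegral.integral_sub intervalIntegrable_const ((intervalIntegral.intervalIntegrable_id).const_mul _)]
  simp only [intervalIntegral.integral_const_mul, intervalIntegral.integral_const, integral_id, integral_pow, smul_eq_mul]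
  rw [intervalIntegral.integral_const_mul, integral_id]
  ring

/-- Lower bound for the inner time integral. -/
lemma jbSq_integral_lb (t T : ℝ) (ht : t ≤ T) (η ξ : EuclideanSpace ℝ (Fin 3)) :
    (T - t) * (1 + ‖ξ‖^2/4) ≤ ∫ τ in t..T, jbSq (ξ + (t - τ) • η) := by
  rw [integral_jbSq]
  set L := T - t with hL
  set A := ‖ξ‖^2 with hA
  set B := (inner ℝ ξ η : ℝ) with hB
  set C := ‖η‖^2 with hC
  have hL0 : 0 ≤ L := by simp [hL]; linarith
  have hA0 : 0 ≤ A := sq_nonneg _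
  have hC0 : 0 ≤ C := sq_nonneg _
  have hBC : B^2 ≤ A * C := by
    rw [hB, hA, hC]
    have h1 : |(inner ℝ ξ η : ℝ)| ≤ ‖ξ‖ * ‖η‖ := abs_real_inner_le_norm ξ η
    nlinarith [sq_abs (inner ℝ ξ η : ℝ), abs_nonneg (inner ℝ ξ η : ℝ), norm_nonneg ξ, norm_nonneg η]
  have key : L * B ≤ (3/4) * A + L^2 * C / 3 := by
    have h1 : (L*B)^2 ≤ ((3/4) * A + L^2 * C / 3)^2 := by
      have : ((3/4) * A + L^2 * C / 3)^2 - L^2 * (A*C) = ((3/4) * A - L^2 * C / 3)^2 := by ring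
      nlinarith [sq_nonneg ((3/4) * A - L^2 * C / 3), mul_le_mul_of_nonneg_left hBC (sq_nonneg L)]
    have h2 : 0 ≤ (3/4) * A + L^2 * C / 3 := by positivity
    nlinarith [h1, h2]
  nlinarith [mul_le_mul_of_nonneg_left key hL0]

/-- The key estimate: the `T`-integral of `|ξ|² M²` is bounded by `2/(εδ)`. -/
lemma key_T_integral (δ ε : ℝ) (hδ : 0 < δ) (hε : 0 < ε) (t T₀ : ℝ) (ht : t ≤ T₀)
    (η ξ : EuclideanSpace ℝ (Fin 3)) :
    ∫⁻ T in Set.Icc t T₀, ENNReal.ofReal (‖ξ‖^2 * (Msymb δ ε t T η ξ)^2)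
      ≤ ENNReal.ofReal (2/(ε*δ)) := by
  set A := ‖ξ‖^2 with hA
  have hA0 : 0 ≤ A := sq_nonneg _
  set m := 1 + A/4 with hm
  have hm1 : 1 ≤ m := by simp [hm]; positivity
  have hm0 : 0 < m := by linarith
  set c := δ * m with hc
  have hc0 : 0 < c := by positivity
  set r := 1 + 2*ε with hr
  set g := fun T : ℝ => A * (1 + c * (T - t)) ^ (-r : ℝ) with hg
  have hpt : ∀ T ∈ Set.Icc t T₀, A * (Msymb δ ε t T η ξ)^2 ≤ g T := by
    intro T hT
    have hTt : t ≤ T := hT.1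
    have hF : (T - t) * m ≤ ∫ τ in t..T, jbSq (ξ + (t - τ) • η) := jbSq_integral_lb t T hTt η ξ
    have hbase : (0:ℝ) < 1 + c * (T - t) := by nlinarith [mul_nonneg hc0.le (sub_nonneg.2 hTt)]
    have hle : 1 + c * (T - t) ≤ 1 + δ * ∫ τ in t..T, jbSq (ξ + (t - τ) • η) := by
      have := mul_le_mul_of_nonneg_left hF hδ.le
      simp only [hc]; nlinarith
    have hsq : (Msymb δ ε t T η ξ)^2
        = (1 + δ * ∫ τ in t..T, jbSq (ξ + (t - τ) • η)) ^ (-r : ℝ) := by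
      rw [Msymb, ← Real.rpow_natCast _ 2, ← Real.rpow_mul (by linarith)]
      congr 1
      push_cast
      rw [hr]; ring
    rw [hsq]
    have := Real.rpow_le_rpow_of_nonpos hbase hle (by simp [hr]; linarith : (-r:ℝ) ≤ 0)
    exact mul_le_mul_of_nonneg_left this hA0
  have hgc : ContinuousOn g (Set.Icc t T₀) := by
    apply ContinuousOn.mul continuousOn_const
    apply ContinuousOn.rpow_const (by fun_prop)
    intro x hx
    left
    have : 0 ≤ c * (x - t) := mul_nonneg hc0.le (by linarith [hx.1])
    positivity
  have hgpos : ∀ T ∈ Set.Icc t T₀, 0 ≤ g T := by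
    intro T hT
    have hb : (0:ℝ) < 1 + c * (T - t) := by
      nlinarith [mul_nonneg hc0.le (sub_nonneg.2 hT.1)]
    have := Real.rpow_nonneg hb.le (-r)
    exact mul_nonneg hA0 this
  set b := 1 + c * (T₀ - t) with hb
  have hb1 : 1 ≤ b := by nlinarith [mul_nonneg hc0.le (sub_nonneg.2 ht)]
  have hrexp : -r + 1 = -(2*ε) := by rw [hr]; ring
  have hval : ∫ T in t..T₀, g T = A * (c⁻¹ * ((b ^ (-r+1 : ℝ) - 1) / (-r+1))) := by
    rw [hg]
    rw [intervalIntegral.integral_const_mul]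
    have hcongr : ∀ T ∈ Set.uIcc t T₀, (1 + c * (T - t)) ^ (-r : ℝ)
        = (fun x : ℝ => x ^ (-r : ℝ)) (c * T + (1 - c*t)) := by
      intro T _; congr 1; ring
    rw [intervalIntegral.integral_congr hcongr,
      intervalIntegral.integral_comp_mul_add (fun x : ℝ => x ^ (-r : ℝ)) hc0.ne' (1 - c*t)]
    rw [show c * t + (1 - c*t) = 1 by ring, show c * T₀ + (1 - c*t) = b by rw [hb]; ring]
    rw [integral_rpow (Or.inr ⟨by rw [hr]; intro h; nlinarith [hε],
      by intro h; rw [Set.mem_uIcc] at h; rcases h with h | h <;> linarith [h.1, h.2]⟩)]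
    rw [Real.one_rpow, smul_eq_mul]
  have hreal : ∫ T in t..T₀, g T ≤ 2/(ε*δ) := by
    rw [hval]
    set β := b ^ (-r+1 : ℝ) with hβ
    have hβ0 : 0 ≤ β := Real.rpow_nonneg (by linarith) _
    have hβ1 : β ≤ 1 := Real.rpow_le_one_of_one_le_of_nonpos hb1 (by rw [hrexp]; linarith)
    have hflip : (β - 1) / (-r+1) = (1 - β)/(2*ε) := by rw [hrexp]; ring
    have hq0 : 0 ≤ (β - 1) / (-r+1) := by
      rw [hflip]
      exact div_nonneg (by linarith) (by linarith)
    have hq : (β - 1) / (-r+1) ≤ 1/(2*ε) := by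
      rw [hflip]
      gcongr
      linarith
    have h1 : A * c⁻¹ ≤ 4 / δ := by
      rw [hc, mul_inv]
      have hAm : A ≤ 4 * m := by rw [hm]; linarith
      calc A * (δ⁻¹ * m⁻¹) ≤ (4*m) * (δ⁻¹ * m⁻¹) := by
            apply mul_le_mul_of_nonneg_right hAm (by positivity)
        _ = 4 / δ := by field_simp
    have h10 : 0 ≤ A * c⁻¹ := by positivity
    calc A * (c⁻¹ * ((β - 1) / (-r+1))) = (A * c⁻¹) * ((β - 1) / (-r+1)) := by ring
      _ ≤ (4/δ) * (1/(2*ε)) := mul_le_mul h1 hq hq0 (by positivity)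
      _ = 2/(ε*δ) := by field_simp; ring
  calc ∫⁻ T in Set.Icc t T₀, ENNReal.ofReal (A * (Msymb δ ε t T η ξ)^2)
      ≤ ∫⁻ T in Set.Icc t T₀, ENNReal.ofReal (g T) :=
        setLIntegral_mono' measurableSet_Icc
          (fun T hT => ENNReal.ofReal_le_ofReal (hpt T hT))
    _ = ENNReal.ofReal (∫ T in Set.Icc t T₀, g T) := by
        rw [← ofReal_integral_eq_lintegral_ofReal (hgc.integrableOn_Icc)
          (ae_restrict_of_forall_mem measurableSet_Icc hgpos)]
    _ ≤ ENNReal.ofReal (2/(ε*δ)) := by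
        apply ENNReal.ofReal_le_ofReal
        rwa [MeasureTheory.integral_Icc_eq_integral_Ioc,
          ← intervalIntegral.integral_of_le ht]

/-- Measurability of the symbol. -/
lemma measurable_Msymb (δ ε : ℝ) (η : EuclideanSpace ℝ (Fin 3)) :
    Measurable fun p : ℝ × ℝ × EuclideanSpace ℝ (Fin 3) => Msymb δ ε p.1 p.2.1 η p.2.2 := by
  have heq : (fun p : ℝ × ℝ × EuclideanSpace ℝ (Fin 3) => Msymb δ ε p.1 p.2.1 η p.2.2)
      = fun p : ℝ × ℝ × EuclideanSpace ℝ (Fin 3) =>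
        (1 + δ * ((p.2.1 - p.1) * (1 + ‖p.2.2‖^2) - (p.2.1 - p.1)^2 * (inner ℝ p.2.2 η : ℝ)
          + (p.2.1 - p.1)^3 * ‖η‖^2 / 3)) ^ (-(1/2 + ε) : ℝ) := by
    funext p
    rw [Msymb, integral_jbSq]
  rw [heq]
  have hbase : Continuous fun p : ℝ × ℝ × EuclideanSpace ℝ (Fin 3) =>
      1 + δ * ((p.2.1 - p.1) * (1 + ‖p.2.2‖^2) - (p.2.1 - p.1)^2 * (inner ℝ p.2.2 η : ℝ)
        + (p.2.1 - p.1)^3 * ‖η‖^2 / 3) := by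
    have hi : Continuous fun p : ℝ × ℝ × EuclideanSpace ℝ (Fin 3) => (inner ℝ p.2.2 η : ℝ) :=
      (innerSL ℝ).flip η |>.continuous.comp (continuous_snd.comp continuous_snd)
    fun_prop
  exact hbase.measurable.pow_const _

/-- Auxiliary integrand. -/
noncomputable def fEta (δ ε : ℝ) (hhat : ℝ → (Fin 3 → ℤ) → EuclideanSpace ℝ (Fin 3) → ℂ)
    (η : Fin 3 → ℤ) (t T : ℝ) (ξ : EuclideanSpace ℝ (Fin 3)) : ℝ≥0∞ :=
  (‖ξ‖₊ : ℝ≥0∞) ^ 2 *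
    (‖Msymb δ ε t T (WithLp.toLp 2 (fun i => (η i : ℝ))) ξ * hhat t η ξ‖₊ : ℝ≥0∞) ^ 2

/-- Auxiliary inner sum-integral. -/
noncomputable def Gfun (δ ε : ℝ) (hhat : ℝ → (Fin 3 → ℤ) → EuclideanSpace ℝ (Fin 3) → ℂ)
    (T t : ℝ) : ℝ≥0∞ :=
  ∑' η : Fin 3 → ℤ, ∫⁻ ξ, fEta δ ε hhat η t T ξ

/-- The triangular region. -/
def Sset (T₀ : ℝ) : Set (ℝ × ℝ) := {q | 0 ≤ q.2 ∧ q.2 ≤ q.1 ∧ q.1 ≤ T₀}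

/-- The indicator extension of `Gfun` to the plane. -/
noncomputable def Ffun (δ ε : ℝ) (hhat : ℝ → (Fin 3 → ℤ) → EuclideanSpace ℝ (Fin 3) → ℂ)
    (T₀ : ℝ) (T t : ℝ) : ℝ≥0∞ :=
  (Sset T₀).indicator (fun q : ℝ × ℝ => Gfun δ ε hhat q.1 q.2) (T, t)

lemma fEta_def (δ ε : ℝ) (hhat : ℝ → (Fin 3 → ℤ) → EuclideanSpace ℝ (Fin 3) → ℂ)
    (η : Fin 3 → ℤ) (t T : ℝ) (ξ : EuclideanSpace ℝ (Fin 3)) :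
    fEta δ ε hhat η t T ξ = (‖ξ‖₊ : ℝ≥0∞) ^ 2 *
      (‖Msymb δ ε t T (WithLp.toLp 2 (fun i => (η i : ℝ))) ξ * hhat t η ξ‖₊ : ℝ≥0∞) ^ 2 := rfl

lemma Gfun_def (δ ε : ℝ) (hhat : ℝ → (Fin 3 → ℤ) → EuclideanSpace ℝ (Fin 3) → ℂ)
    (T t : ℝ) : Gfun δ ε hhat T t = ∑' η : Fin 3 → ℤ, ∫⁻ ξ, fEta δ ε hhat η t T ξ := rfl

lemma Ffun_def (δ ε : ℝ) (hhat : ℝ → (Fin 3 → ℤ) → EuclideanSpace ℝ (Fin 3) → ℂ)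
    (T₀ T t : ℝ) : Ffun δ ε hhat T₀ T t
      = (Sset T₀).indicator (fun q : ℝ × ℝ => Gfun δ ε hhat q.1 q.2) (T, t) := rfl

lemma mem_Sset {T₀ T t : ℝ} : (T, t) ∈ Sset T₀ ↔ 0 ≤ t ∧ t ≤ T ∧ T ≤ T₀ := Iff.rfl

lemma measurableSet_Sset (T₀ : ℝ) : MeasurableSet (Sset T₀) := by
  have h1 : Sset T₀
      = {q : ℝ × ℝ | 0 ≤ q.2} ∩ {q : ℝ × ℝ | q.2 ≤ q.1} ∩ {q : ℝ × ℝ | q.1 ≤ T₀} := by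
    ext q; simp [Sset, and_assoc]
  rw [h1]
  exact ((measurableSet_le measurable_const measurable_snd).inter
    (measurableSet_le measurable_snd measurable_fst)).inter
    (measurableSet_le measurable_fst measurable_const)

attribute [irreducible] fEta Gfun Ffun Sset

lemma measurable_fEta (δ ε : ℝ) (hhat : ℝ → (Fin 3 → ℤ) → EuclideanSpace ℝ (Fin 3) → ℂ)
    (hmeas : Measurable
      fun q : ℝ × (Fin 3 → ℤ) × EuclideanSpace ℝ (Fin 3) => hhat q.1 q.2.1 q.2.2)
    (η : Fin 3 → ℤ) :
    Measurable fun p : ℝ × ℝ × EuclideanSpace ℝ (Fin 3) => fEta δ ε hhat η p.1 p.2.1 p.2.2 := by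
  simp only [fEta_def]
  have h1 : Measurable fun p : ℝ × ℝ × EuclideanSpace ℝ (Fin 3) =>
      ((Msymb δ ε p.1 p.2.1 (WithLp.toLp 2 (fun i => (η i : ℝ))) p.2.2 : ℂ) * hhat p.1 η p.2.2) := by
    apply Measurable.mul
    · exact Complex.measurable_ofReal.comp (measurable_Msymb δ ε _)
    · exact hmeas.comp
        (measurable_fst.prodMk (measurable_const.prodMk (measurable_snd.comp measurable_snd)))
  exact ((measurable_snd.comp measurable_snd).nnnorm.coe_nnreal_ennreal.pow_const 2).mul
    (h1.nnnorm.coe_nnreal_ennreal.pow_const 2)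

lemma measurable_Gfun (δ ε : ℝ) (hhat : ℝ → (Fin 3 → ℤ) → EuclideanSpace ℝ (Fin 3) → ℂ)
    (hmeas : Measurable
      fun q : ℝ × (Fin 3 → ℤ) × EuclideanSpace ℝ (Fin 3) => hhat q.1 q.2.1 q.2.2) :
    Measurable fun q : ℝ × ℝ => Gfun δ ε hhat q.1 q.2 := by
  simp only [Gfun_def]
  apply Measurable.ennreal_tsum
  intro η
  exact Measurable.lintegral_prod_right (f := fun (q : ℝ × ℝ) ξ => fEta δ ε hhat η q.2 q.1 ξ)
    ((measurable_fEta δ ε hhat hmeas η).comp ((measurable_snd.comp measurable_fst).prodMk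
      ((measurable_fst.comp measurable_fst).prodMk measurable_snd)))

end Aux

/-- the time-averaged regularization estimate
`∫_0^{T₀} ∫_0^T ∑_η ∫ |ξ|² |M ĥ|² dξ dt dT ≤ (2/(εδ)) ∫_0^{T₀} ∑_η ∫ |ĥ|² dξ dt`,
where `ĥ(t,η,ξ)` is the Fourier transform of `h(t,·,·)` in `(x,v) ∈ 𝕋³ × ℝ³`. -/
theorem M_multiplier_gain_derivative (δ ε T₀ : ℝ) (hδ : 0 < δ) (hε : 0 < ε)
    (hT₀ : 0 ≤ T₀)
    (hhat : ℝ → (Fin 3 → ℤ) → EuclideanSpace ℝ (Fin 3) → ℂ)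
    (hmeas : Measurable
      fun q : ℝ × (Fin 3 → ℤ) × EuclideanSpace ℝ (Fin 3) => hhat q.1 q.2.1 q.2.2) :
    (∫⁻ T in Set.Icc 0 T₀, ∫⁻ t in Set.Icc 0 T,
        ∑' η : Fin 3 → ℤ, ∫⁻ ξ,
          (‖ξ‖₊ : ℝ≥0∞) ^ 2 *
            (‖Msymb δ ε t T (WithLp.toLp 2 (fun i => (η i : ℝ))) ξ * hhat t η ξ‖₊ : ℝ≥0∞) ^ 2)
      ≤ ENNReal.ofReal (2 / (ε * δ)) *
        ∫⁻ t in Set.Icc 0 T₀,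
          ∑' η : Fin 3 → ℤ, ∫⁻ ξ, (‖hhat t η ξ‖₊ : ℝ≥0∞) ^ 2 := by
  classical
  have hSm := measurableSet_Sset T₀
  have hGm := measurable_Gfun δ ε hhat hmeas
  have hFm : Measurable fun q : ℝ × ℝ => Ffun δ ε hhat T₀ q.1 q.2 := by
    simp only [Ffun_def, Prod.mk.eta]
    exact hGm.indicator hSm
  have e1 : (∫⁻ T in Set.Icc 0 T₀, ∫⁻ t in Set.Icc 0 T, Gfun δ ε hhat T t)
      = ∫⁻ T, ∫⁻ t, Ffun δ ε hhat T₀ T t := by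
    have key : ∀ T : ℝ, (∫⁻ t, Ffun δ ε hhat T₀ T t)
        = Set.indicator (Set.Icc 0 T₀) (fun T' => ∫⁻ t in Set.Icc 0 T', Gfun δ ε hhat T' t) T := by
      intro T
      by_cases hT : T ∈ Set.Icc 0 T₀
      · rw [Set.indicator_of_mem hT, ← lintegral_indicator measurableSet_Icc]
        apply lintegral_congr
        intro t
        rw [Ffun_def]
        by_cases htm : t ∈ Set.Icc 0 T
        · rw [Set.indicator_of_mem htm]
          exact Set.indicator_of_mem (mem_Sset.2 ⟨htm.1, htm.2, hT.2⟩) _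
        · rw [Set.indicator_of_notMem htm]
          exact Set.indicator_of_notMem (fun h => htm ⟨(mem_Sset.1 h).1, (mem_Sset.1 h).2.1⟩) _
      · rw [Set.indicator_of_notMem hT]
        have hz : ∀ t : ℝ, Ffun δ ε hhat T₀ T t = 0 := by
          intro t
          rw [Ffun_def]
          exact Set.indicator_of_notMem (fun h => hT
            ⟨le_trans (mem_Sset.1 h).1 (mem_Sset.1 h).2.1, (mem_Sset.1 h).2.2⟩) _
        simp [hz]
    rw [lintegral_congr key, lintegral_indicator measurableSet_Icc]
  have e2 : (∫⁻ T, ∫⁻ t, Ffun δ ε hhat T₀ T t) = ∫⁻ t, ∫⁻ T, Ffun δ ε hhat T₀ T t :=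
    lintegral_lintegral_swap hFm.aemeasurable
  have e3 : (∫⁻ t, ∫⁻ T, Ffun δ ε hhat T₀ T t)
      = ∫⁻ t in Set.Icc 0 T₀, ∫⁻ T in Set.Icc t T₀, Gfun δ ε hhat T t := by
    have key : ∀ t : ℝ, (∫⁻ T, Ffun δ ε hhat T₀ T t)
        = Set.indicator (Set.Icc 0 T₀) (fun t' => ∫⁻ T in Set.Icc t' T₀, Gfun δ ε hhat T t') t := by
      intro t
      by_cases ht : t ∈ Set.Icc 0 T₀
      · rw [Set.indicator_of_mem ht, ← lintegral_indicator measurableSet_Icc]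
        apply lintegral_congr
        intro T
        rw [Ffun_def]
        by_cases hTm : T ∈ Set.Icc t T₀
        · rw [Set.indicator_of_mem hTm]
          exact Set.indicator_of_mem (mem_Sset.2 ⟨ht.1, hTm.1, hTm.2⟩) _
        · rw [Set.indicator_of_notMem hTm]
          exact Set.indicator_of_notMem (fun h => hTm ⟨(mem_Sset.1 h).2.1, (mem_Sset.1 h).2.2⟩) _
      · rw [Set.indicator_of_notMem ht]
        have hz : ∀ T : ℝ, Ffun δ ε hhat T₀ T t = 0 := by
          intro T
          rw [Ffun_def]
          exact Set.indicator_of_notMem (fun h => ht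
            ⟨(mem_Sset.1 h).1, le_trans (mem_Sset.1 h).2.1 (mem_Sset.1 h).2.2⟩) _
        simp [hz]
    rw [lintegral_congr key, lintegral_indicator measurableSet_Icc]
  have step3 : ∀ t ∈ Set.Icc (0:ℝ) T₀,
      (∫⁻ T in Set.Icc t T₀, Gfun δ ε hhat T t)
        ≤ ENNReal.ofReal (2 / (ε * δ))
            * ∑' η : Fin 3 → ℤ, ∫⁻ ξ, (‖hhat t η ξ‖₊ : ℝ≥0∞) ^ 2 := by
    intro t ht
    have hswap2 : ∀ η : Fin 3 → ℤ,
        (∫⁻ T in Set.Icc t T₀, ∫⁻ ξ, fEta δ ε hhat η t T ξ)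
          = ∫⁻ ξ, ∫⁻ T in Set.Icc t T₀, fEta δ ε hhat η t T ξ := by
      intro η
      exact lintegral_lintegral_swap (((measurable_fEta δ ε hhat hmeas η).comp
        ((measurable_const.prodMk (measurable_fst.prodMk measurable_snd))
          : Measurable fun q : ℝ × EuclideanSpace ℝ (Fin 3) => (t, q.1, q.2))).aemeasurable)
    have hTmeas : ∀ η : Fin 3 → ℤ, AEMeasurable (fun T => ∫⁻ ξ, fEta δ ε hhat η t T ξ)
        ((volume : Measure ℝ).restrict (Set.Icc t T₀)) := by
      intro η
      apply Measurable.aemeasurable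
      exact Measurable.lintegral_prod_right (f := fun (T : ℝ) ξ => fEta δ ε hhat η t T ξ)
        ((measurable_fEta δ ε hhat hmeas η).comp
          (measurable_const.prodMk (measurable_fst.prodMk measurable_snd)))
    calc (∫⁻ T in Set.Icc t T₀, Gfun δ ε hhat T t)
        = ∑' η : Fin 3 → ℤ, ∫⁻ T in Set.Icc t T₀, ∫⁻ ξ, fEta δ ε hhat η t T ξ := by
          simp only [Gfun_def]
          exact lintegral_tsum hTmeas
      _ = ∑' η : Fin 3 → ℤ, ∫⁻ ξ, ∫⁻ T in Set.Icc t T₀, fEta δ ε hhat η t T ξ :=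
          tsum_congr hswap2
      _ ≤ ∑' η : Fin 3 → ℤ, ∫⁻ ξ,
            ENNReal.ofReal (2 / (ε * δ)) * (‖hhat t η ξ‖₊ : ℝ≥0∞) ^ 2 := by
          apply ENNReal.tsum_le_tsum
          intro η
          apply lintegral_mono
          intro ξ
          have hinner : ∀ T : ℝ, fEta δ ε hhat η t T ξ
              = ENNReal.ofReal (‖ξ‖^2 * (Msymb δ ε t T (WithLp.toLp 2 (fun i => (η i : ℝ))) ξ)^2)
                * (‖hhat t η ξ‖₊ : ℝ≥0∞) ^ 2 := by
            intro T
            rw [fEta_def]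
            set M := Msymb δ ε t T (WithLp.toLp 2 (fun i => (η i : ℝ))) ξ with hM
            rw [nnnorm_mul, Complex.nnnorm_real]
            have hM2 : ((‖M‖₊ : ℝ≥0∞)) ^ 2 = ENNReal.ofReal (M ^ 2) := by
              rw [← Real.enorm_eq_ofReal (sq_nonneg M), enorm_pow, enorm_eq_nnnorm]
            have hξ2 : ((‖ξ‖₊ : ℝ≥0∞)) ^ 2 = ENNReal.ofReal (‖ξ‖ ^ 2) := by
              rw [ENNReal.ofReal_pow (norm_nonneg _), ofReal_norm_eq_enorm, enorm_eq_nnnorm]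
            rw [ENNReal.ofReal_mul (sq_nonneg _), ← hM2, ← hξ2]
            push_cast
            ring
          calc (∫⁻ T in Set.Icc t T₀, fEta δ ε hhat η t T ξ)
              = (∫⁻ T in Set.Icc t T₀,
                  ENNReal.ofReal (‖ξ‖^2 * (Msymb δ ε t T (WithLp.toLp 2 (fun i => (η i : ℝ))) ξ)^2))
                * (‖hhat t η ξ‖₊ : ℝ≥0∞) ^ 2 := by
                rw [← lintegral_mul_const' _ _ (ENNReal.pow_ne_top ENNReal.coe_ne_top)]
                exact lintegral_congr fun T => hinner T
            _ ≤ ENNReal.ofReal (2 / (ε * δ)) * (‖hhat t η ξ‖₊ : ℝ≥0∞) ^ 2 :=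
                mul_le_mul_left (key_T_integral δ ε hδ hε t T₀ ht.2 _ ξ) _
      _ = ENNReal.ofReal (2 / (ε * δ))
            * ∑' η : Fin 3 → ℤ, ∫⁻ ξ, (‖hhat t η ξ‖₊ : ℝ≥0∞) ^ 2 := by
          rw [← ENNReal.tsum_mul_left]
          exact tsum_congr fun η => lintegral_const_mul' _ _ ENNReal.ofReal_ne_top
  calc (∫⁻ T in Set.Icc 0 T₀, ∫⁻ t in Set.Icc 0 T,
        ∑' η : Fin 3 → ℤ, ∫⁻ ξ,
          (‖ξ‖₊ : ℝ≥0∞) ^ 2 *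
            (‖Msymb δ ε t T (WithLp.toLp 2 (fun i => (η i : ℝ))) ξ * hhat t η ξ‖₊ : ℝ≥0∞) ^ 2)
      = ∫⁻ T in Set.Icc 0 T₀, ∫⁻ t in Set.Icc 0 T, Gfun δ ε hhat T t := by
        simp only [Gfun_def, fEta_def]
    _ ≤ ∫⁻ t in Set.Icc 0 T₀, ENNReal.ofReal (2 / (ε * δ))
          * ∑' η : Fin 3 → ℤ, ∫⁻ ξ, (‖hhat t η ξ‖₊ : ℝ≥0∞) ^ 2 := by
        rw [e1, e2, e3]
        exact setLIntegral_mono' measurableSet_Icc step3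
    _ = ENNReal.ofReal (2 / (ε * δ)) * ∫⁻ t in Set.Icc 0 T₀,
          ∑' η : Fin 3 → ℤ, ∫⁻ ξ, (‖hhat t η ξ‖₊ : ℝ≥0∞) ^ 2 :=
        lintegral_const_mul' _ _ ENNReal.ofReal_ne_top
end
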